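/- Let (G,I,O,λ) be a labelled open graph with gflow (g,≺). Form Γ' by adding a new vertex u' adjacent only to an input u ∈ I, setting I' = (I∖{u}) ∪ {u'}, and λ'(u') = XY. Then Γ' has a gflow: extend g by g'(u') = {u} and let ≺' be the transitive closure of ≺ ∪ {(u',w) : w ∈ N_G(u) ∪ {u}}. -/

import Mathlib

open Set

/-- The three measurement planes. -/
inductive MPlane | XY | XZ | YZ
deriving DecidableEq

/-- The odd neighbourhood of a set `K`: vertices with an odd number of neighbours in `K`. -/
def oddNbhd {V : Type*} (G : SimpleGraph V) (K : Set V) : Set V :=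
  {u | Odd (K ∩ G.neighborSet u).ncard}

/-- `(g, prec)` is a gflow for the labelled open graph `(G, I, O, lam)`. -/
structure GFlow {V : Type*} (G : SimpleGraph V) (I O : Set V) (lam : V → MPlane)
    (g : V → Set V) (prec : V → V → Prop) : Prop where
  irrefl : ∀ v, ¬ prec v v
  trans : ∀ u v w, prec u v → prec v w → prec u w
  noInput : ∀ v, v ∉ O → g v ∩ I = ∅
  g1 : ∀ v, v ∉ O → ∀ w ∈ g v, w ≠ v → prec v w
  g2 : ∀ v, v ∉ O → ∀ w ∈ oddNbhd G (g v), w ≠ v → prec v w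
  gXY : ∀ v, v ∉ O → lam v = MPlane.XY → v ∉ g v ∧ v ∈ oddNbhd G (g v)
  gXZ : ∀ v, v ∉ O → lam v = MPlane.XZ → v ∈ g v ∧ v ∈ oddNbhd G (g v)
  gYZ : ∀ v, v ∉ O → lam v = MPlane.YZ → v ∈ g v ∧ v ∉ oddNbhd G (g v)

/-- The graph obtained from `G` by adding a fresh vertex (`none`) adjacent only to `u`. -/
def addVertex {V : Type*} (G : SimpleGraph V) (u : V) : SimpleGraph (Option V) where
  Adj x y := (∃ a b, x = some a ∧ y = some b ∧ G.Adj a b) ∨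
    (x = some u ∧ y = none) ∨ (x = none ∧ y = some u)
  symm := by
    constructor
    rintro x y (⟨a, b, rfl, rfl, hab⟩ | ⟨rfl, rfl⟩ | ⟨rfl, rfl⟩)
    · exact Or.inl ⟨b, a, rfl, rfl, hab.symm⟩
    · exact Or.inr (Or.inr ⟨rfl, rfl⟩)
    · exact Or.inr (Or.inl ⟨rfl, rfl⟩)
  loopless := by
    constructor
    rintro x (⟨a, b, rfl, hb, hab⟩ | ⟨rfl, h⟩ | ⟨rfl, h⟩)
    · cases hb; exact G.irrefl hab
    · exact Option.some_ne_none _ h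
    · exact (Option.some_ne_none _ h.symm)

/-!
The new vertex `u'` has no `≺'`-predecessor, so `≺'` is irreflexive because `≺` is. Its
correction set `{u}` has odd neighbourhood `N_G(u) ∪ {u'}`, which lies above `u'` by the
definition of `≺'`. An old correction set `g(v)` avoids the input `u`, so in `G'` its odd
neighbourhood misses `u'` and agrees with the one in `G` on old vertices.
-/

section AddVertex

variable {V : Type*} (G : SimpleGraph V) (u : V)

@[simp]
lemma addVertex_adj_some_some {a b : V} :
    (addVertex G u).Adj (some a) (some b) ↔ G.Adj a b := by
  simp [addVertex]

@[simp]
lemma addVertex_adj_none {x : Option V} : (addVertex G u).Adj none x ↔ x = some u := by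
  simp [addVertex]

lemma addVertex_neighborSet_none : (addVertex G u).neighborSet none = {some u} := by
  ext; simp

lemma preimage_some_addVertex_neighborSet (b : V) :
    some ⁻¹' (addVertex G u).neighborSet (some b) = G.neighborSet b := by
  ext; simp

lemma some_mem_oddNbhd_addVertex_image_iff {K : Set V} {b : V} :
    some b ∈ oddNbhd (addVertex G u) (some '' K) ↔ b ∈ oddNbhd G K := by
  simp only [oddNbhd, mem_ofPred_eq, ← image_inter_preimage, preimage_some_addVertex_neighborSet,
    ncard_image_of_injective _ (Option.some_injective V)]

lemma none_notMem_oddNbhd_addVertex_image {K : Set V} (hu : u ∉ K) :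
    none ∉ oddNbhd (addVertex G u) (some '' K) := by
  have : some '' K ∩ {some u} = ∅ := by simpa using hu
  simp [oddNbhd, addVertex_neighborSet_none, this]

end AddVertex

lemma mem_oddNbhd_singleton_iff {V : Type*} {G : SimpleGraph V} {x v : V} :
    v ∈ oddNbhd G {x} ↔ G.Adj x v := by
  by_cases hxv : G.Adj x v
  · simp [oddNbhd, singleton_inter_of_mem (G.mem_neighborSet v x |>.2 hxv.symm), hxv]
  · have : {x} ∩ G.neighborSet v = ∅ :=
      singleton_inter_eq_empty.2 fun h => hxv ((G.mem_neighborSet v x).1 h).symm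
    simp [oddNbhd, this, hxv]

section AddInput

variable {V : Type*} {G : SimpleGraph V} {I O : Set V} {lam : V → MPlane} {g : V → Set V}
  {prec : V → V → Prop}

def addInputCorrection (g : V → Set V) (u : V) : Option V → Set (Option V) :=
  fun x => x.elim {some u} (fun v => some '' g v)

def addInputOrder (G : SimpleGraph V) (prec : V → V → Prop) (u : V) :
    Option V → Option V → Prop :=
  fun x y => (∃ a b, x = some a ∧ y = some b ∧ prec a b) ∨
    (x = none ∧ ∃ w, y = some w ∧ (G.Adj u w ∨ w = u))

lemma exists_of_transGen_addInputOrder (htrans : ∀ a b c, prec a b → prec b c → prec a c)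
    {u : V} {x y : Option V} (hxy : Relation.TransGen (addInputOrder G prec u) x y) :
    ∃ b, y = some b ∧ ∀ a, x = some a → prec a b := by
  induction hxy with
  | single hxy =>
    rcases hxy with ⟨a, b, rfl, rfl, hab⟩ | ⟨rfl, w, rfl, -⟩
    · exact ⟨b, rfl, fun _ h => Option.some_injective V h ▸ hab⟩
    · exact ⟨w, rfl, fun _ h => nomatch h⟩
  | tail _ hyz ih =>
    obtain ⟨b, rfl, hb⟩ := ih
    rcases hyz with ⟨_, c, hb', rfl, hbc⟩ | ⟨h, -⟩
    · cases hb'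
      exact ⟨c, rfl, fun a ha => htrans a b c (hb a ha) hbc⟩
    · cases h

lemma GFlow.irrefl_transGen_addInputOrder (h : GFlow G I O lam g prec) (u : V) (x : Option V) :
    ¬ Relation.TransGen (addInputOrder G prec u) x x := fun hx => by
  obtain ⟨b, rfl, hb⟩ := exists_of_transGen_addInputOrder h.trans hx
  exact h.irrefl b (hb b rfl)

lemma GFlow.notMem_correction_of_mem_input (h : GFlow G I O lam g prec) {a u : V} (ha : a ∉ O)
    (hu : u ∈ I) : u ∉ g a :=
  fun hua => (eq_empty_iff_forall_notMem.1 (h.noInput a ha)) u ⟨hua, hu⟩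

lemma some_mem_addInputCorrection_some {u a b : V} :
    some b ∈ addInputCorrection g u (some a) ↔ b ∈ g a :=
  (Option.some_injective V).mem_set_image

lemma some_mem_oddNbhd_addInputCorrection_some {u a b : V} :
    some b ∈ oddNbhd (addVertex G u) (addInputCorrection g u (some a)) ↔
      b ∈ oddNbhd G (g a) :=
  some_mem_oddNbhd_addVertex_image_iff G u

variable (u : V) (h : GFlow G I O lam g prec) (v : Option V) (hv : v ∉ some '' O)
include h hv

lemma GFlow.addInput_noInput :
    addInputCorrection g u v ∩ (some '' (I \ {u}) ∪ {none}) = ∅ := by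
  rcases v with _ | a
  · simp [addInputCorrection]
  · have hga := h.noInput a (mt (mem_image_of_mem some) hv)
    simp only [addInputCorrection, eq_empty_iff_forall_notMem, Option.elim_some] at hga ⊢
    rintro _ ⟨⟨b, hb, rfl⟩, ⟨c, ⟨hc, -⟩, hcb⟩ | hnone⟩
    · exact hga b ⟨hb, Option.some_injective V hcb ▸ hc⟩
    · cases hnone

lemma GFlow.addInput_g1 (w : Option V) (hw : w ∈ addInputCorrection g u v) (hne : w ≠ v) :
    Relation.TransGen (addInputOrder G prec u) v w := by
  rcases v with _ | a
  · obtain rfl : w = some u := hw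
    exact .single (Or.inr ⟨rfl, u, rfl, Or.inr rfl⟩)
  · obtain ⟨b, hb, rfl⟩ := hw
    have hab := h.g1 a (mt (mem_image_of_mem some) hv) b hb (ne_of_apply_ne some hne)
    exact .single (Or.inl ⟨a, b, rfl, rfl, hab⟩)

lemma GFlow.addInput_g2 (hu : u ∈ I) (w : Option V)
    (hw : w ∈ oddNbhd (addVertex G u) (addInputCorrection g u v)) (hne : w ≠ v) :
    Relation.TransGen (addInputOrder G prec u) v w := by
  rcases v with _ | a <;> rcases w with _ | b
  · exact absurd rfl hne
  · have hub : G.Adj u b := (addVertex_adj_some_some G u).1 (mem_oddNbhd_singleton_iff.1 hw)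
    exact .single (Or.inr ⟨rfl, b, rfl, Or.inl hub⟩)
  · have hua := h.notMem_correction_of_mem_input (mt (mem_image_of_mem some) hv) hu
    exact absurd hw (none_notMem_oddNbhd_addVertex_image G u hua)
  · have hab := h.g2 a (mt (mem_image_of_mem some) hv) b
      (some_mem_oddNbhd_addInputCorrection_some.1 hw) (ne_of_apply_ne some hne)
    exact .single (Or.inl ⟨a, b, rfl, rfl, hab⟩)

lemma GFlow.addInput_gXY (hlam : v.elim MPlane.XY lam = MPlane.XY) :
    v ∉ addInputCorrection g u v ∧
      v ∈ oddNbhd (addVertex G u) (addInputCorrection g u v) := by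
  rcases v with _ | a
  · exact ⟨nofun, mem_oddNbhd_singleton_iff.2 ((addVertex_adj_none G u).2 rfl).symm⟩
  · simpa only [some_mem_addInputCorrection_some, some_mem_oddNbhd_addInputCorrection_some]
      using h.gXY a (mt (mem_image_of_mem some) hv) hlam

lemma GFlow.addInput_gXZ (hlam : v.elim MPlane.XY lam = MPlane.XZ) :
    v ∈ addInputCorrection g u v ∧
      v ∈ oddNbhd (addVertex G u) (addInputCorrection g u v) := by
  rcases v with _ | a
  · cases hlam
  · simpa only [some_mem_addInputCorrection_some, some_mem_oddNbhd_addInputCorrection_some]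
      using h.gXZ a (mt (mem_image_of_mem some) hv) hlam

lemma GFlow.addInput_gYZ (hlam : v.elim MPlane.XY lam = MPlane.YZ) :
    v ∈ addInputCorrection g u v ∧
      v ∉ oddNbhd (addVertex G u) (addInputCorrection g u v) := by
  rcases v with _ | a
  · cases hlam
  · simpa only [some_mem_addInputCorrection_some, some_mem_oddNbhd_addInputCorrection_some]
      using h.gYZ a (mt (mem_image_of_mem some) hv) hlam

end AddInput

theorem gflow_addInput_general {V : Type*}
    (G : SimpleGraph V) (I O : Set V) (lam : V → MPlane)
    (g : V → Set V) (prec : V → V → Prop)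
    (h : GFlow G I O lam g prec) (u : V) (hu : u ∈ I) :
    GFlow (addVertex G u)
      ((some '' (I \ {u})) ∪ {none})
      (some '' O)
      (fun x => x.elim MPlane.XY (fun v => lam v))
      (fun x => x.elim {some u} (fun v => some '' g v))
      (Relation.TransGen (fun x y =>
        (∃ a b, x = some a ∧ y = some b ∧ prec a b) ∨
        (x = none ∧ ∃ w, y = some w ∧ (G.Adj u w ∨ w = u)))) :=
  ⟨h.irrefl_transGen_addInputOrder u, fun _ _ _ => .trans, h.addInput_noInput u, h.addInput_g1 u,
    fun v hv => h.addInput_g2 u v hv hu, h.addInput_gXY u, h.addInput_gXZ u, h.addInput_gYZ u⟩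

/-- Adding a new XY-measured vertex `u'` (modelled as `none`) 'before' the
input `u` preserves gflow, via `g'(u') = {u}` and the transitive closure of
`≺ ∪ {(u',w) : w ∈ N_G(u) ∪ {u}}`. -/
theorem gflow_addInput {V : Type*} [Fintype V]
    (G : SimpleGraph V) (I O : Set V) (lam : V → MPlane)
    (g : V → Set V) (prec : V → V → Prop)
    (h : GFlow G I O lam g prec) (u : V) (hu : u ∈ I) :
    GFlow (addVertex G u)
      ((some '' (I \ {u})) ∪ {none})
      (some '' O)
      (fun x => x.elim MPlane.XY (fun v => lam v))
      (fun x => x.elim {some u} (fun v => some '' g v))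
      (Relation.TransGen (fun x y =>
        (∃ a b, x = some a ∧ y = some b ∧ prec a b) ∨
        (x = none ∧ ∃ w, y = some w ∧ (G.Adj u w ∨ w = u)))) :=
  gflow_addInput_general G I O lam g prec h u hu
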